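/- Let ū ∈ R^M be the characteristic vector of a nonempty U* ⊆ {1,…,M} and v̄ ∈ R^N the characteristic vector of a nonempty V* ⊆ {1,…,N}. Define the following subsets of R^{M×N}: S₁ = { Z : ūᵀ Z = 0 and Z v̄ = 0 }; S₂ = { x v̄ᵀ : x ∈ R^M with x_i = 0 for all i ∈ U* }; S₃ = { ū yᵀ : y ∈ R^N with y_j = 0 for all j ∈ V* }; S₄ = { ū yᵀ + x v̄ᵀ : x ∈ R^M nonzero only on entries indexed by U*, y ∈ R^N nonzero only on entries indexed by V*, and the sum of all entries of ū yᵀ + x v̄ᵀ is zero }; S₅ = { α ū v̄ᵀ : α ∈ R }. Then S₁, …, S₅ are linear subspaces that are mutually orthogonal with respect to the Frobenius inner product, and their direct sum is all of R^{M×N}. -/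

import Mathlib

/-!
Write `ū`, `v̄` for the characteristic vectors of `U*`, `V*`. Every matrix in `S₂, …, S₅` has the
form `ū yᵀ + x v̄ᵀ`, and `⟨Z, ū yᵀ + x v̄ᵀ⟩ = (ūᵀ Z) y + xᵀ (Z v̄)` vanishes for `Z ∈ S₁`; the other
orthogonality relations come from `⟨a bᵀ, c dᵀ⟩ = (a ⬝ c)(b ⬝ d)` and disjointness of supports.
Given `Z`, the matrix `(I - ū ūᵀ/|U*|) Z (I - v̄ v̄ᵀ/|V*|)` lies in `S₁` and differs from `Z` by
some `ū yᵀ + x v̄ᵀ`, which splits along the supports of `ū` and `v̄` into pieces of `S₂, …, S₅`.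
Uniqueness follows from orthogonality and positive definiteness of the Frobenius inner product.
-/

open Matrix

def frobInner {m n : Type*} [Fintype m] [Fintype n] (A B : Matrix m n ℝ) : ℝ :=
  ∑ i, ∑ j, A i j * B i j

def charVec {ι : Type*} [DecidableEq ι] (S : Finset ι) : ι → ℝ :=
  fun i => if i ∈ S then 1 else 0

def S1 {M N : ℕ} (Ustar : Finset (Fin M)) (Vstar : Finset (Fin N)) :
    Set (Matrix (Fin M) (Fin N) ℝ) :=
  {Z | charVec Ustar ᵥ* Z = 0 ∧ Z *ᵥ charVec Vstar = 0}

def S2 {M N : ℕ} (Ustar : Finset (Fin M)) (Vstar : Finset (Fin N)) :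
    Set (Matrix (Fin M) (Fin N) ℝ) :=
  {Z | ∃ x : Fin M → ℝ, (∀ i ∈ Ustar, x i = 0) ∧ Z = vecMulVec x (charVec Vstar)}

def S3 {M N : ℕ} (Ustar : Finset (Fin M)) (Vstar : Finset (Fin N)) :
    Set (Matrix (Fin M) (Fin N) ℝ) :=
  {Z | ∃ y : Fin N → ℝ, (∀ j ∈ Vstar, y j = 0) ∧ Z = vecMulVec (charVec Ustar) y}

def S4 {M N : ℕ} (Ustar : Finset (Fin M)) (Vstar : Finset (Fin N)) :
    Set (Matrix (Fin M) (Fin N) ℝ) :=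
  {Z | ∃ (x : Fin M → ℝ) (y : Fin N → ℝ),
    (∀ i ∉ Ustar, x i = 0) ∧ (∀ j ∉ Vstar, y j = 0) ∧
    Z = vecMulVec (charVec Ustar) y + vecMulVec x (charVec Vstar) ∧
    (∑ i, ∑ j, Z i j) = 0}

def S5 {M N : ℕ} (Ustar : Finset (Fin M)) (Vstar : Finset (Fin N)) :
    Set (Matrix (Fin M) (Fin N) ℝ) :=
  {Z | ∃ α : ℝ, Z = α • vecMulVec (charVec Ustar) (charVec Vstar)}

section FrobeniusInner

variable {m n : Type*} [Fintype m] [Fintype n]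

lemma frobInner_comm (A B : Matrix m n ℝ) : frobInner A B = frobInner B A := by
  simp only [frobInner, mul_comm]

lemma frobInner_add_right (A B C : Matrix m n ℝ) :
    frobInner A (B + C) = frobInner A B + frobInner A C := by
  simp only [frobInner, Matrix.add_apply, mul_add, Finset.sum_add_distrib]

lemma frobInner_smul_right (c : ℝ) (A B : Matrix m n ℝ) :
    frobInner A (c • B) = c * frobInner A B := by
  simp only [frobInner, Matrix.smul_apply, smul_eq_mul, Finset.mul_sum, mul_left_comm]

lemma frobInner_sum_right {ι : Type*} (s : Finset ι) (A : Matrix m n ℝ) (B : ι → Matrix m n ℝ) :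
    frobInner A (∑ k ∈ s, B k) = ∑ k ∈ s, frobInner A (B k) := by
  simp only [frobInner, Matrix.sum_apply, Finset.mul_sum]
  exact (Finset.sum_congr rfl fun i _ => Finset.sum_comm).trans Finset.sum_comm

lemma frobInner_self_eq_zero {A : Matrix m n ℝ} : frobInner A A = 0 ↔ A = 0 := by
  have hrows : ∀ i ∈ Finset.univ, 0 ≤ A i ⬝ᵥ A i :=
    fun i _ => Finset.sum_nonneg fun j _ => mul_self_nonneg (A i j)
  change ∑ i, A i ⬝ᵥ A i = 0 ↔ A = 0
  simp only [Finset.sum_eq_zero_iff_of_nonneg hrows, Finset.mem_univ, true_implies,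
    dotProduct_self_eq_zero]
  exact (funext_iff (f := A) (g := 0)).symm

lemma frobInner_vecMulVec_right (A : Matrix m n ℝ) (c : m → ℝ) (d : n → ℝ) :
    frobInner A (vecMulVec c d) = c ⬝ᵥ (A *ᵥ d) := by
  simp only [frobInner, vecMulVec_apply, dotProduct, mulVec, Finset.mul_sum]
  exact Finset.sum_congr rfl fun i _ => Finset.sum_congr rfl fun j _ => by ring

lemma frobInner_vecMulVec_right' (A : Matrix m n ℝ) (c : m → ℝ) (d : n → ℝ) :
    frobInner A (vecMulVec c d) = (c ᵥ* A) ⬝ᵥ d := by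
  rw [frobInner_vecMulVec_right, dotProduct_mulVec]

lemma frobInner_vecMulVec_vecMulVec (a c : m → ℝ) (b d : n → ℝ) :
    frobInner (vecMulVec a b) (vecMulVec c d) = (a ⬝ᵥ c) * (b ⬝ᵥ d) := by
  rw [frobInner_vecMulVec_right', vecMul_vecMulVec, smul_dotProduct, smul_eq_mul,
    dotProduct_comm c]

lemma eq_zero_of_pairwise_frobInner_eq_zero {ι : Type*} [Fintype ι] {D : ι → Matrix m n ℝ}
    (horth : Pairwise fun i j => frobInner (D i) (D j) = 0) (hsum : ∑ k, D k = 0) (i : ι) :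
    D i = 0 := by
  classical
  rw [← frobInner_self_eq_zero]
  have h := congrArg (frobInner (D i)) hsum
  rwa [frobInner_sum_right, Finset.sum_eq_single i (fun j _ hji => horth hji.symm) (by simp),
    show frobInner (D i) 0 = 0 by simp [frobInner]] at h

def FrobOrthogonal (S T : Set (Matrix m n ℝ)) : Prop :=
  ∀ A ∈ S, ∀ B ∈ T, frobInner A B = 0

instance : Std.Symm (FrobOrthogonal (m := m) (n := n)) :=
  ⟨fun _ _ h B hB A hA => (frobInner_comm B A).trans (h A hA B hB)⟩

end FrobeniusInner

section CharVec

lemma charVec_of_notMem {ι : Type*} [DecidableEq ι] {S : Finset ι} {i : ι} (hi : i ∉ S) :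
    charVec S i = 0 :=
  if_neg hi

variable {ι : Type*} [Fintype ι] [DecidableEq ι]

lemma charVec_dotProduct (S : Finset ι) (x : ι → ℝ) : charVec S ⬝ᵥ x = ∑ i ∈ S, x i := by
  simp [dotProduct, charVec, Finset.sum_ite_mem]

lemma sum_charVec (S : Finset ι) : ∑ i, charVec S i = S.card := by
  simp [charVec]

lemma charVec_dotProduct_self (S : Finset ι) : charVec S ⬝ᵥ charVec S = S.card := by
  simp [charVec_dotProduct, charVec]

lemma dotProduct_eq_zero_of_disjoint_support {S : Finset ι} {x y : ι → ℝ}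
    (hx : ∀ i ∈ S, x i = 0) (hy : ∀ i ∉ S, y i = 0) : x ⬝ᵥ y = 0 :=
  Finset.sum_eq_zero fun i _ => by
    by_cases hi : i ∈ S
    · rw [hx i hi, zero_mul]
    · rw [hy i hi, mul_zero]

lemma dotProduct_charVec_eq_zero {S : Finset ι} {x : ι → ℝ} (hx : ∀ i ∈ S, x i = 0) :
    x ⬝ᵥ charVec S = 0 :=
  dotProduct_eq_zero_of_disjoint_support hx fun _ => charVec_of_notMem

end CharVec

lemma sum_sum_vecMulVec {m n : Type*} [Fintype m] [Fintype n] (a : m → ℝ) (b : n → ℝ) :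
    ∑ i, ∑ j, vecMulVec a b i j = (∑ i, a i) * ∑ j, b j := by
  rw [Finset.sum_mul_sum]
  rfl

section Subspaces

variable {M N : ℕ} (U : Finset (Fin M)) (V : Finset (Fin N))

def S1Submodule : Submodule ℝ (Matrix (Fin M) (Fin N) ℝ) where
  carrier := S1 U V
  add_mem' := by
    rintro A B ⟨hA, hA'⟩ ⟨hB, hB'⟩
    exact ⟨by rw [vecMul_add, hA, hB, add_zero], by rw [add_mulVec, hA', hB', add_zero]⟩
  zero_mem' := ⟨vecMul_zero _, zero_mulVec _⟩
  smul_mem' := by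
    rintro c A ⟨hA, hA'⟩
    exact ⟨by rw [vecMul_smul, hA, smul_zero], by rw [smul_mulVec, hA', smul_zero]⟩

def S2Submodule : Submodule ℝ (Matrix (Fin M) (Fin N) ℝ) where
  carrier := S2 U V
  add_mem' := by
    rintro _ _ ⟨x, hx, rfl⟩ ⟨x', hx', rfl⟩
    exact ⟨x + x', fun i hi => by simp [hx i hi, hx' i hi], (add_vecMulVec x x' _).symm⟩
  zero_mem' := ⟨0, fun _ _ => rfl, (zero_vecMulVec _).symm⟩
  smul_mem' := by
    rintro c _ ⟨x, hx, rfl⟩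
    exact ⟨c • x, fun i hi => by simp [hx i hi], (smul_vecMulVec c x _).symm⟩

def S3Submodule : Submodule ℝ (Matrix (Fin M) (Fin N) ℝ) where
  carrier := S3 U V
  add_mem' := by
    rintro _ _ ⟨y, hy, rfl⟩ ⟨y', hy', rfl⟩
    exact ⟨y + y', fun j hj => by simp [hy j hj, hy' j hj], (vecMulVec_add _ y y').symm⟩
  zero_mem' := ⟨0, fun _ _ => rfl, by ext; simp [vecMulVec_apply]⟩
  smul_mem' := by
    rintro c _ ⟨y, hy, rfl⟩
    exact ⟨c • y, fun j hj => by simp [hy j hj], (vecMulVec_smul c _ y).symm⟩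

def S4Submodule : Submodule ℝ (Matrix (Fin M) (Fin N) ℝ) where
  carrier := S4 U V
  add_mem' := by
    rintro A B ⟨x, y, hx, hy, rfl, hA⟩ ⟨x', y', hx', hy', rfl, hB⟩
    refine ⟨x + x', y + y', fun i hi => by simp [hx i hi, hx' i hi],
      fun j hj => by simp [hy j hj, hy' j hj], by rw [vecMulVec_add, add_vecMulVec]; abel, ?_⟩
    simp only [Matrix.add_apply, Finset.sum_add_distrib] at hA hB ⊢
    linarith
  zero_mem' := ⟨0, 0, fun _ _ => rfl, fun _ _ => rfl, by ext; simp [vecMulVec_apply], by simp⟩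
  smul_mem' := by
    rintro c _ ⟨x, y, hx, hy, rfl, hsum⟩
    refine ⟨c • x, c • y, fun i hi => by simp [hx i hi], fun j hj => by simp [hy j hj],
      by rw [vecMulVec_smul, smul_vecMulVec, smul_add], ?_⟩
    simp only [Matrix.smul_apply, smul_eq_mul, ← Finset.mul_sum, hsum, mul_zero]

def S5Submodule : Submodule ℝ (Matrix (Fin M) (Fin N) ℝ) where
  carrier := S5 U V
  add_mem' := by
    rintro _ _ ⟨α, rfl⟩ ⟨β, rfl⟩
    exact ⟨α + β, (add_smul α β _).symm⟩
  zero_mem' := ⟨0, (zero_smul ℝ _).symm⟩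
  smul_mem' := by
    rintro c _ ⟨α, rfl⟩
    exact ⟨c * α, smul_smul c α _⟩

end Subspaces

section Orthogonality

variable {M N : ℕ} {U : Finset (Fin M)} {V : Finset (Fin N)}

def rankOneSums (U : Finset (Fin M)) (V : Finset (Fin N)) : Set (Matrix (Fin M) (Fin N) ℝ) :=
  {Z | ∃ x y, Z = vecMulVec (charVec U) y + vecMulVec x (charVec V)}

lemma frobOrthogonal_S1_rankOneSums : FrobOrthogonal (S1 U V) (rankOneSums U V) := by
  rintro Z ⟨hZ, hZ'⟩ _ ⟨x, y, rfl⟩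
  rw [frobInner_add_right, frobInner_vecMulVec_right', frobInner_vecMulVec_right, hZ, hZ',
    zero_dotProduct, dotProduct_zero, add_zero]

lemma frobOrthogonal_S1_of_subset {T : Set (Matrix (Fin M) (Fin N) ℝ)}
    (hT : T ⊆ rankOneSums U V) : FrobOrthogonal (S1 U V) T :=
  fun A hA B hB => frobOrthogonal_S1_rankOneSums A hA B (hT hB)

lemma S2_subset_rankOneSums : S2 U V ⊆ rankOneSums U V := by
  rintro _ ⟨x, -, rfl⟩
  exact ⟨x, 0, by ext; simp [vecMulVec_apply]⟩

lemma S3_subset_rankOneSums : S3 U V ⊆ rankOneSums U V := by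
  rintro _ ⟨y, -, rfl⟩
  exact ⟨0, y, by simp⟩

lemma S4_subset_rankOneSums : S4 U V ⊆ rankOneSums U V := by
  rintro _ ⟨x, y, -, -, rfl, -⟩
  exact ⟨x, y, rfl⟩

lemma S5_subset_rankOneSums : S5 U V ⊆ rankOneSums U V := by
  rintro _ ⟨α, rfl⟩
  exact ⟨0, α • charVec V, by rw [vecMulVec_smul, zero_vecMulVec, add_zero]⟩

lemma frobOrthogonal_S2_S3 : FrobOrthogonal (S2 U V) (S3 U V) := by
  rintro _ ⟨x, hx, rfl⟩ _ ⟨y, -, rfl⟩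
  rw [frobInner_vecMulVec_vecMulVec, dotProduct_charVec_eq_zero hx, zero_mul]

lemma frobOrthogonal_S2_S4 : FrobOrthogonal (S2 U V) (S4 U V) := by
  rintro _ ⟨x, hx, rfl⟩ _ ⟨x', y', hx', -, rfl, -⟩
  rw [frobInner_add_right, frobInner_vecMulVec_vecMulVec, frobInner_vecMulVec_vecMulVec,
    dotProduct_charVec_eq_zero hx, dotProduct_eq_zero_of_disjoint_support hx hx']
  ring

lemma frobOrthogonal_S2_S5 : FrobOrthogonal (S2 U V) (S5 U V) := by
  rintro _ ⟨x, hx, rfl⟩ _ ⟨α, rfl⟩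
  rw [frobInner_smul_right, frobInner_vecMulVec_vecMulVec, dotProduct_charVec_eq_zero hx]
  ring

lemma frobOrthogonal_S3_S4 : FrobOrthogonal (S3 U V) (S4 U V) := by
  rintro _ ⟨y, hy, rfl⟩ _ ⟨x', y', -, hy', rfl, -⟩
  rw [frobInner_add_right, frobInner_vecMulVec_vecMulVec, frobInner_vecMulVec_vecMulVec,
    dotProduct_charVec_eq_zero hy, dotProduct_eq_zero_of_disjoint_support hy hy']
  ring

lemma frobOrthogonal_S3_S5 : FrobOrthogonal (S3 U V) (S5 U V) := by
  rintro _ ⟨y, hy, rfl⟩ _ ⟨α, rfl⟩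
  rw [frobInner_smul_right, frobInner_vecMulVec_vecMulVec, dotProduct_charVec_eq_zero hy]
  ring

lemma frobInner_vecMulVec_charVec_of_support {Z : Matrix (Fin M) (Fin N) ℝ}
    (hZ : ∀ i j, Z i j ≠ 0 → i ∈ U ∧ j ∈ V) :
    frobInner Z (vecMulVec (charVec U) (charVec V)) = ∑ i, ∑ j, Z i j := by
  refine Finset.sum_congr rfl fun i _ => Finset.sum_congr rfl fun j _ => ?_
  by_cases h : Z i j = 0
  · rw [h, zero_mul]
  · obtain ⟨hi, hj⟩ := hZ i j h
    simp [vecMulVec_apply, charVec, hi, hj]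

lemma support_of_mem_S4 {Z : Matrix (Fin M) (Fin N) ℝ} (hZ : Z ∈ S4 U V) :
    ∀ i j, Z i j ≠ 0 → i ∈ U ∧ j ∈ V := by
  obtain ⟨x, y, hx, hy, rfl, -⟩ := hZ
  intro i j hij
  by_contra hout
  refine hij ?_
  rcases not_and_or.1 hout with hi | hj
  · simp [vecMulVec_apply, charVec_of_notMem hi, hx i hi]
  · simp [vecMulVec_apply, charVec_of_notMem hj, hy j hj]

lemma frobOrthogonal_S4_S5 : FrobOrthogonal (S4 U V) (S5 U V) := by
  rintro Z hZ _ ⟨α, rfl⟩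
  have hsupp := support_of_mem_S4 hZ
  obtain ⟨-, -, -, -, -, hsum⟩ := hZ
  rw [frobInner_smul_right, frobInner_vecMulVec_charVec_of_support hsupp, hsum, mul_zero]

lemma pairwise_frobOrthogonal (U : Finset (Fin M)) (V : Finset (Fin N)) :
    Pairwise (Function.onFun FrobOrthogonal ![S1 U V, S2 U V, S3 U V, S4 U V, S5 U V]) := by
  rw [Std.Symm.pairwise_on]
  intro i j hij
  fin_cases i <;> fin_cases j <;> try exact absurd hij (by decide)
  exacts [frobOrthogonal_S1_of_subset S2_subset_rankOneSums,
    frobOrthogonal_S1_of_subset S3_subset_rankOneSums,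
    frobOrthogonal_S1_of_subset S4_subset_rankOneSums,
    frobOrthogonal_S1_of_subset S5_subset_rankOneSums,
    frobOrthogonal_S2_S3, frobOrthogonal_S2_S4, frobOrthogonal_S2_S5,
    frobOrthogonal_S3_S4, frobOrthogonal_S3_S5, frobOrthogonal_S4_S5]

end Orthogonality

section Decomposition

variable {M N : ℕ} {U : Finset (Fin M)} {V : Finset (Fin N)}

lemma exists_sub_vecMulVec_add_vecMulVec_mem_S1 (hU : U.Nonempty) (hV : V.Nonempty)
    (Z : Matrix (Fin M) (Fin N) ℝ) :
    ∃ x y, Z - (vecMulVec (charVec U) y + vecMulVec x (charVec V)) ∈ S1 U V := by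
  have hm : (U.card : ℝ) ≠ 0 := Nat.cast_ne_zero.2 hU.card_pos.ne'
  have hn : (V.card : ℝ) ≠ 0 := Nat.cast_ne_zero.2 hV.card_pos.ne'
  set s := charVec U ⬝ᵥ (Z *ᵥ charVec V) with hs
  have hs' : (charVec U ᵥ* Z) ⬝ᵥ charVec V = s := (dotProduct_mulVec _ _ _).symm
  refine ⟨(V.card : ℝ)⁻¹ • (Z *ᵥ charVec V) - (s / (U.card * V.card)) • charVec U,
    (U.card : ℝ)⁻¹ • (charVec U ᵥ* Z), ?_, ?_⟩
  · ext j
    simp only [vecMulVec_smul, vecMul_sub, vecMul_add, vecMul_smul, vecMul_vecMulVec,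
      charVec_dotProduct_self, dotProduct_sub, dotProduct_smul, ← hs, smul_eq_mul, Pi.sub_apply,
      Pi.add_apply, Pi.smul_apply, Pi.zero_apply]
    field_simp
    ring
  · ext i
    simp only [vecMulVec_smul, sub_mulVec, add_mulVec, smul_mulVec, vecMulVec_mulVec, hs',
      op_smul_eq_smul, dotProduct_comm (charVec V), charVec_dotProduct_self, Pi.sub_apply,
      Pi.add_apply, Pi.smul_apply, smul_eq_mul, Pi.zero_apply]
    field_simp
    ring

lemma vecMulVec_add_vecMulVec_mem_sup (hU : U.Nonempty) (hV : V.Nonempty)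
    (x : Fin M → ℝ) (y : Fin N → ℝ) :
    vecMulVec (charVec U) y + vecMulVec x (charVec V) ∈
      S2Submodule U V ⊔ S3Submodule U V ⊔ S4Submodule U V ⊔ S5Submodule U V := by
  have hm : (U.card : ℝ) ≠ 0 := Nat.cast_ne_zero.2 hU.card_pos.ne'
  have hn : (V.card : ℝ) ≠ 0 := Nat.cast_ne_zero.2 hV.card_pos.ne'
  set xin : Fin M → ℝ := fun i => if i ∈ U then x i else 0
  set xout : Fin M → ℝ := fun i => if i ∈ U then 0 else x i
  set yin : Fin N → ℝ := fun j => if j ∈ V then y j else 0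
  set yout : Fin N → ℝ := fun j => if j ∈ V then 0 else y j
  -- `c • ū v̄ᵀ` takes over the entry sum of `ū yinᵀ + xin v̄ᵀ`, leaving an element of `S₄`
  set c : ℝ := (∑ i ∈ U, x i) / U.card + (∑ j ∈ V, y j) / V.card
  have hx : x = xin + xout := by ext i; by_cases hi : i ∈ U <;> simp [xin, xout, hi]
  have hy : y = yin + yout := by ext j; by_cases hj : j ∈ V <;> simp [yin, yout, hj]
  have hsplit : vecMulVec (charVec U) y + vecMulVec x (charVec V) =
      vecMulVec xout (charVec V) + vecMulVec (charVec U) yout +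
        (vecMulVec (charVec U) yin + vecMulVec (xin - c • charVec U) (charVec V)) +
        c • vecMulVec (charVec U) (charVec V) := by
    rw [hx, hy, add_vecMulVec, vecMulVec_add, sub_vecMulVec, smul_vecMulVec]
    abel
  have hsum : ∑ i, ∑ j, (vecMulVec (charVec U) yin +
      vecMulVec (xin - c • charVec U) (charVec V)) i j = 0 := by
    simp only [Matrix.add_apply, Finset.sum_add_distrib, sum_sum_vecMulVec, xin, yin, c,
      Finset.sum_ite_mem, Finset.univ_inter, Pi.sub_apply, Pi.smul_apply, smul_eq_mul,
      Finset.sum_sub_distrib, ← Finset.mul_sum, sum_charVec]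
    field_simp
    ring
  rw [hsplit]
  refine Submodule.add_mem_sup (Submodule.add_mem_sup (Submodule.add_mem_sup
    ⟨xout, fun i hi => if_pos hi, rfl⟩ ⟨yout, fun j hj => if_pos hj, rfl⟩)
    ⟨xin - c • charVec U, yin, fun i hi => ?_, fun j hj => if_neg hj, rfl, hsum⟩) ⟨c, rfl⟩
  simp [xin, hi, charVec_of_notMem hi]

lemma sup_subspaces_eq_top (hU : U.Nonempty) (hV : V.Nonempty) :
    S1Submodule U V ⊔ S2Submodule U V ⊔ S3Submodule U V ⊔ S4Submodule U V ⊔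
      S5Submodule U V = ⊤ := by
  refine eq_top_iff.2 fun Z _ => ?_
  obtain ⟨x, y, hZ⟩ := exists_sub_vecMulVec_add_vecMulVec_mem_S1 hU hV Z
  have h := Submodule.add_mem_sup (S := S1Submodule U V) hZ
    (vecMulVec_add_vecMulVec_mem_sup hU hV x y)
  rw [sub_add_cancel] at h
  simpa only [sup_assoc] using h

variable (U V) in
def IsDecomposition (Z : Matrix (Fin M) (Fin N) ℝ)
    (q : Matrix (Fin M) (Fin N) ℝ × Matrix (Fin M) (Fin N) ℝ × Matrix (Fin M) (Fin N) ℝ ×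
      Matrix (Fin M) (Fin N) ℝ × Matrix (Fin M) (Fin N) ℝ) : Prop :=
  q.1 ∈ S1 U V ∧ q.2.1 ∈ S2 U V ∧ q.2.2.1 ∈ S3 U V ∧ q.2.2.2.1 ∈ S4 U V ∧
    q.2.2.2.2 ∈ S5 U V ∧ Z = q.1 + q.2.1 + q.2.2.1 + q.2.2.2.1 + q.2.2.2.2

lemma exists_isDecomposition (hU : U.Nonempty) (hV : V.Nonempty)
    (Z : Matrix (Fin M) (Fin N) ℝ) : ∃ q, IsDecomposition U V Z q := by
  have hZ : Z ∈ S1Submodule U V ⊔ S2Submodule U V ⊔ S3Submodule U V ⊔ S4Submodule U V ⊔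
      S5Submodule U V := by
    rw [sup_subspaces_eq_top hU hV]
    exact Submodule.mem_top
  obtain ⟨Z1234, h1234, Z5, h5, rfl⟩ := Submodule.mem_sup.1 hZ
  obtain ⟨Z123, h123, Z4, h4, rfl⟩ := Submodule.mem_sup.1 h1234
  obtain ⟨Z12, h12, Z3, h3, rfl⟩ := Submodule.mem_sup.1 h123
  obtain ⟨Z1, h1, Z2, h2, rfl⟩ := Submodule.mem_sup.1 h12
  exact ⟨(Z1, Z2, Z3, Z4, Z5), h1, h2, h3, h4, h5, rfl⟩

lemma IsDecomposition.unique {Z : Matrix (Fin M) (Fin N) ℝ} {q q'}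
    (hq : IsDecomposition U V Z q) (hq' : IsDecomposition U V Z q') : q = q' := by
  obtain ⟨Z1, Z2, Z3, Z4, Z5⟩ := q
  obtain ⟨W1, W2, W3, W4, W5⟩ := q'
  obtain ⟨h1, h2, h3, h4, h5, rfl⟩ := hq
  obtain ⟨g1, g2, g3, g4, g5, hW⟩ := hq'
  set D := ![Z1 - W1, Z2 - W2, Z3 - W3, Z4 - W4, Z5 - W5]
  have hmem : ∀ i, D i ∈ ![S1 U V, S2 U V, S3 U V, S4 U V, S5 U V] i := by
    intro i
    fin_cases i
    exacts [(S1Submodule U V).sub_mem h1 g1, (S2Submodule U V).sub_mem h2 g2,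
      (S3Submodule U V).sub_mem h3 g3, (S4Submodule U V).sub_mem h4 g4,
      (S5Submodule U V).sub_mem h5 g5]
  have hsum : ∑ i, D i = 0 := by
    simp only [D, Fin.sum_univ_five, Fin.isValue, cons_val] at hW ⊢
    rw [← sub_eq_zero.2 hW]
    abel
  have hD := eq_zero_of_pairwise_frobInner_eq_zero
    (fun i j hij => pairwise_frobOrthogonal U V hij _ (hmem i) _ (hmem j)) hsum
  simp only [Prod.mk.injEq]
  exact ⟨sub_eq_zero.1 (hD 0), sub_eq_zero.1 (hD 1), sub_eq_zero.1 (hD 2),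
    sub_eq_zero.1 (hD 3), sub_eq_zero.1 (hD 4)⟩

end Decomposition

/-- `S₁, …, S₅` are linear subspaces of `R^{M×N}`, mutually orthogonal with
respect to the Frobenius inner product, and every matrix decomposes uniquely as a sum
`Z₁ + Z₂ + Z₃ + Z₄ + Z₅` with `Zᵢ ∈ Sᵢ` (i.e., their direct sum is all of `R^{M×N}`). -/
theorem subspace_decomposition
    (M N : ℕ) (Ustar : Finset (Fin M)) (Vstar : Finset (Fin N))
    (hU : Ustar.Nonempty) (hV : Vstar.Nonempty) :
    (∀ S ∈ ({S1 Ustar Vstar, S2 Ustar Vstar, S3 Ustar Vstar, S4 Ustar Vstar,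
              S5 Ustar Vstar} : Set (Set (Matrix (Fin M) (Fin N) ℝ))),
      ∃ T : Submodule ℝ (Matrix (Fin M) (Fin N) ℝ), (T : Set (Matrix (Fin M) (Fin N) ℝ)) = S) ∧
    (∀ i j : Fin 5, i ≠ j →
      ∀ Z₁ ∈ ![S1 Ustar Vstar, S2 Ustar Vstar, S3 Ustar Vstar, S4 Ustar Vstar,
               S5 Ustar Vstar] i,
      ∀ Z₂ ∈ ![S1 Ustar Vstar, S2 Ustar Vstar, S3 Ustar Vstar, S4 Ustar Vstar,
               S5 Ustar Vstar] j,
        frobInner Z₁ Z₂ = 0) ∧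
    (∀ Z : Matrix (Fin M) (Fin N) ℝ,
      ∃! q : Matrix (Fin M) (Fin N) ℝ × Matrix (Fin M) (Fin N) ℝ ×
             Matrix (Fin M) (Fin N) ℝ × Matrix (Fin M) (Fin N) ℝ ×
             Matrix (Fin M) (Fin N) ℝ,
        q.1 ∈ S1 Ustar Vstar ∧ q.2.1 ∈ S2 Ustar Vstar ∧ q.2.2.1 ∈ S3 Ustar Vstar ∧
        q.2.2.2.1 ∈ S4 Ustar Vstar ∧ q.2.2.2.2 ∈ S5 Ustar Vstar ∧
        Z = q.1 + q.2.1 + q.2.2.1 + q.2.2.2.1 + q.2.2.2.2) := by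
  refine ⟨?_, fun i j hij => pairwise_frobOrthogonal Ustar Vstar hij, fun Z => ?_⟩
  · simp only [Set.mem_insert_iff, Set.mem_singleton_iff]
    rintro S (rfl | rfl | rfl | rfl | rfl)
    exacts [⟨S1Submodule Ustar Vstar, rfl⟩, ⟨S2Submodule Ustar Vstar, rfl⟩,
      ⟨S3Submodule Ustar Vstar, rfl⟩, ⟨S4Submodule Ustar Vstar, rfl⟩,
      ⟨S5Submodule Ustar Vstar, rfl⟩]
  · obtain ⟨q, hq⟩ := exists_isDecomposition hU hV Z
    exact ⟨q, hq, fun q' hq' => IsDecomposition.unique hq' hq⟩
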